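/- Let A and B be isoclinic skew left braces. Then the commutator subgroups of Λ_{Aᵒᵖ} = (A,·) ⋊_{λᵒᵖ} (A,∘) and Λ_{Bᵒᵖ} = (B,·) ⋊_{λᵒᵖ} (B,∘) are isomorphic as groups. -/

import Mathlib

/-- A skew left brace: a type with a group structure `(A, *)` (the additive group,
written multiplicatively) and a second group structure `(A, ∘)` (given by `circ`),
satisfying `a ∘ (b * c) = (a ∘ b) * a⁻¹ * (a ∘ c)`. -/
class SkewLeftBrace (A : Type*) extends Group A where
  circ : A → A → A
  circ_assoc : ∀ a b c : A, circ (circ a b) c = circ a (circ b c)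
  one_circ : ∀ a : A, circ 1 a = a
  circ_one : ∀ a : A, circ a 1 = a
  cinv : A → A
  cinv_circ : ∀ a : A, circ (cinv a) a = 1
  compat : ∀ a b c : A, circ a (b * c) = circ a b * a⁻¹ * circ a c

namespace SkewLeftBrace

variable {A : Type*} [SkewLeftBrace A]

/-- Type synonym for `A` carrying the multiplicative group `(A, ∘)`. -/
def Circ (A : Type*) := A

def toCirc {A : Type*} : A → Circ A := fun a => a
def ofCirc {A : Type*} : Circ A → A := fun a => a

instance Circ.instGroup : Group (Circ A) where
  mul a b := toCirc (circ (ofCirc a) (ofCirc b))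
  one := toCirc 1
  inv a := toCirc (cinv (ofCirc a))
  mul_assoc a b c := circ_assoc (A := A) a b c
  one_mul a := one_circ (A := A) a
  mul_one a := circ_one (A := A) a
  inv_mul_cancel a := cinv_circ (A := A) a

/-- The lambda map `λ_a(b) = a⁻¹ * (a ∘ b)`. -/
def lam (a b : A) : A := a⁻¹ * circ a b

/-- The opposite lambda map `λᵒᵖ_a(b) = (a ∘ b) * a⁻¹`. -/
def lamOp (a b : A) : A := circ a b * a⁻¹

lemma circ_cinv (a : A) : circ a (cinv a) = 1 := mul_inv_cancel (toCirc a)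

lemma circ_inv (a b : A) : circ a b⁻¹ = a * (circ a b)⁻¹ * a := by
  have h := compat a b b⁻¹
  rw [mul_inv_cancel, circ_one] at h
  have h2 : circ a b * a⁻¹ * circ a b⁻¹ = a := h.symm
  calc circ a b⁻¹ = (circ a b * a⁻¹)⁻¹ * (circ a b * a⁻¹ * circ a b⁻¹) := by group
    _ = a * (circ a b)⁻¹ * a := by rw [h2]; group

/-- `λ_a` as an automorphism of `(A, *)`. -/
def lamEquiv (a : A) : A ≃* A where
  toFun := lam a
  invFun b := circ (cinv a) (a * b)
  left_inv b := by
    show circ (cinv a) (a * (a⁻¹ * circ a b)) = b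
    rw [mul_inv_cancel_left, ← circ_assoc, cinv_circ, one_circ]
  right_inv b := by
    show a⁻¹ * circ a (circ (cinv a) (a * b)) = b
    rw [← circ_assoc, circ_cinv, one_circ, inv_mul_cancel_left]
  map_mul' b c := by
    show a⁻¹ * circ a (b * c) = (a⁻¹ * circ a b) * (a⁻¹ * circ a c)
    rw [compat]; group

lemma lam_circ (a b c : A) : lam (circ a b) c = lam a (lam b c) := by
  unfold lam
  rw [circ_assoc, compat, circ_inv]
  group

/-- The lambda map as a group homomorphism `(A, ∘) → Aut(A, *)`. -/
def lamHom : Circ A →* MulAut A where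
  toFun a := lamEquiv (ofCirc a)
  map_one' := by
    ext b
    show lam (1 : A) b = b
    simp [lam, one_circ]
  map_mul' a b := by
    ext c
    rw [MulAut.mul_apply]
    exact lam_circ (ofCirc a) (ofCirc b) c

/-- `λᵒᵖ_a` as an automorphism of `(A, *)`. -/
def lamOpEquiv (a : A) : MulAut A := MulAut.conj a * lamEquiv a

lemma lamOpEquiv_apply (a b : A) : lamOpEquiv a b = lamOp a b := by
  show a * (a⁻¹ * circ a b) * a⁻¹ = circ a b * a⁻¹
  group

lemma lamOp_circ (a b c : A) : lamOp (circ a b) c = lamOp a (lamOp b c) := by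
  unfold lamOp
  rw [circ_assoc, compat, circ_inv]
  group

/-- The opposite lambda map as a group homomorphism `(A, ∘) → Aut(A, *)`. -/
def lamOpHom : Circ A →* MulAut A where
  toFun a := lamOpEquiv (ofCirc a)
  map_one' := by
    ext b
    rw [lamOpEquiv_apply]
    show circ (1 : A) b * (1 : A)⁻¹ = b
    rw [one_circ]; group
  map_mul' a b := by
    ext c
    rw [MulAut.mul_apply, lamOpEquiv_apply, lamOpEquiv_apply, lamOpEquiv_apply]
    exact lamOp_circ (ofCirc a) (ofCirc b) c

/-- The group `Λ_{Aᵒᵖ} = (A,·) ⋊_{λᵒᵖ} (A,∘)`. -/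
abbrev LambdaOp (A : Type*) [SkewLeftBrace A] := SemidirectProduct A (Circ A) lamOpHom

/-- The group `Λ_A = (A,·) ⋊_{λ} (A,∘)`. -/
abbrev Lambda (A : Type*) [SkewLeftBrace A] := SemidirectProduct A (Circ A) lamHom

/-- The skew brace commutator `A'`: the subgroup of `(A,·)` generated by all
`a*b*a⁻¹*b⁻¹` and all `a * λ_b(a⁻¹)`. -/
def braceCommutator (A : Type*) [SkewLeftBrace A] : Subgroup A :=
  Subgroup.closure
    {x : A | (∃ a b : A, x = a * b * a⁻¹ * b⁻¹) ∨ (∃ a b : A, x = a * lam b a⁻¹)}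

instance braceCommutator_normal : (braceCommutator A).Normal := by
  constructor
  intro x hx g
  have h1 : g * x * g⁻¹ * x⁻¹ ∈ braceCommutator A :=
    Subgroup.subset_closure (Or.inl ⟨g, x, rfl⟩)
  have h2 : g * x * g⁻¹ = (g * x * g⁻¹ * x⁻¹) * x := by group
  rw [h2]
  exact mul_mem h1 hx

/-- `Fix(λ) = {x : λ_a(x) = x for all a}`. -/
def fixLam (A : Type*) [SkewLeftBrace A] : Set A := {x | ∀ a, lam a x = x}

/-- The annihilator `Ann(A) = Ker(λ) ∩ Z(A,·) ∩ Fix(λ)` as a set. -/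
def annSet (A : Type*) [SkewLeftBrace A] : Set A :=
  {x | (∀ b, lam x b = b) ∧ (∀ a, a * x = x * a) ∧ (∀ a, lam a x = x)}

end SkewLeftBrace

open SkewLeftBrace

/-- The coset relation modulo the annihilator. -/
def AnnRel (A : Type*) [SkewLeftBrace A] (a a' : A) : Prop := a⁻¹ * a' ∈ annSet A

/-- An isoclinism of skew left braces `A` and `B`, encoded by a lift `f : A → B` of a
skew brace isomorphism `ξ₁ : A/Ann(A) → B/Ann(B)` together with a skew brace
isomorphism `g = ξ₂ : A' → B'`, compatible with the maps
`θ(ā,b̄) = a·b·a⁻¹·b⁻¹` and `θ*(ā,b̄) = λ_a(b)·b⁻¹`. -/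
structure SkewBraceIsoclinism (A B : Type*) [SkewLeftBrace A] [SkewLeftBrace B] where
  f : A → B
  g : A → B
  f_mul : ∀ a a' : A, AnnRel B (f (a * a')) (f a * f a')
  f_circ : ∀ a a' : A, AnnRel B (f (circ a a')) (circ (f a) (f a'))
  f_surj : ∀ b : B, ∃ a : A, AnnRel B (f a) b
  f_inj : ∀ a a' : A, AnnRel B (f a) (f a') ↔ AnnRel A a a'
  g_maps : ∀ x ∈ braceCommutator A, g x ∈ braceCommutator B
  g_mul : ∀ x ∈ braceCommutator A, ∀ y ∈ braceCommutator A, g (x * y) = g x * g y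
  g_circ : ∀ x ∈ braceCommutator A, ∀ y ∈ braceCommutator A,
    g (circ x y) = circ (g x) (g y)
  g_bij : Set.BijOn g (braceCommutator A) (braceCommutator B)
  compat_theta : ∀ a b : A, g (a * b * a⁻¹ * b⁻¹) = f a * f b * (f a)⁻¹ * (f b)⁻¹
  compat_thetaStar : ∀ a b : A, g (lam a b * b⁻¹) = lam (f a) (f b) * (f b)⁻¹


/-!
Modulo `A'` the group `(A, ·)` is abelian and `λᵒᵖ` acts trivially, so every commutator of
`Λ_{Aᵒᵖ}` lies in `A' ⋊ (A, ∘)'`; conversely the generators of `A'` and of `(A, ∘)'` are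
commutators of `Λ_{Aᵒᵖ}` up to conjugation, so `Λ_{Aᵒᵖ}' = A' ⋊ (A, ∘)'`. Since `(A, ∘)' ⊆ A'`
and `ξ₂` preserves both `·` and `∘` on `A'`, applying `ξ₂` to both coordinates is a homomorphism;
it remains to see that `ξ₂` maps `(A, ∘)'` onto `(B, ∘)'`. For `q = [a, b]_∘` the relation
`q ∘ (b ∘ a) = a ∘ b` gives `q = (a ∘ b)(b ∘ a)⁻¹ θ*(q, b ∘ a)⁻¹`, and `(a ∘ b)(b ∘ a)⁻¹` is
`θ(a, b)` times conjugates of `θ*(a, b)` and `θ*(b, a)⁻¹`. As `θ` and `θ*` only see their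
arguments modulo `Ann`, `ξ₂` sends each factor to the same expression in `ξ₁a, ξ₁b`, whence
`ξ₂ [a, b]_∘ = [ξ₁a, ξ₁b]_∘`.
-/

open scoped commutatorElement

section CentralCommutator

variable {G : Type*} [Group G]

lemma commutatorElement_mul_of_mem_center_left {z : G} (hz : z ∈ Subgroup.center G) (a b : G) :
    ⁅a * z, b⁆ = ⁅a, b⁆ := by
  have hzb : z * b * z⁻¹ = b := by
    rw [← Subgroup.mem_center_iff.mp hz b, mul_inv_cancel_right]
  rw [commutatorElement_def, commutatorElement_def, mul_inv_rev,
    show a * z * b * (z⁻¹ * a⁻¹) = a * (z * b * z⁻¹) * a⁻¹ by group, hzb]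

lemma commutatorElement_eq_of_mk_eq {N : Subgroup G} (hN : N ≤ Subgroup.center G) {a a' b b' : G}
    (ha : (a : G ⧸ N) = a') (hb : (b : G ⧸ N) = b') : ⁅a, b⁆ = ⁅a', b'⁆ := by
  obtain ⟨z, hz, rfl⟩ : ∃ z ∈ N, a' = a * z :=
    ⟨_, QuotientGroup.eq.mp ha, (mul_inv_cancel_left a a').symm⟩
  obtain ⟨w, hw, rfl⟩ : ∃ w ∈ N, b' = b * w :=
    ⟨_, QuotientGroup.eq.mp hb, (mul_inv_cancel_left b b').symm⟩
  rw [commutatorElement_mul_of_mem_center_left (hN hz), ← commutatorElement_inv (b * w),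
    commutatorElement_mul_of_mem_center_left (hN hw), commutatorElement_inv]

end CentralCommutator

namespace SkewLeftBrace

variable {A : Type*} [SkewLeftBrace A]

lemma circ_eq_mul_lam (a b : A) : circ a b = a * lam a b := (mul_inv_cancel_left a _).symm

lemma lam_mul (a b c : A) : lam a (b * c) = lam a b * lam a c := map_mul (lamEquiv a) b c

lemma lam_inv (a b : A) : lam a b⁻¹ = (lam a b)⁻¹ := map_inv (lamEquiv a) b

lemma lam_one (a : A) : lam a 1 = 1 := map_one (lamEquiv a)

lemma cinv_eq_lam_inv (a : A) : cinv a = lam (cinv a) a⁻¹ := by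
  rw [lam, circ_inv, cinv_circ]
  group

lemma circ_mul_inv_eq_mul_lam_mul_inv (a b : A) : circ a b * b⁻¹ = a * (lam a b * b⁻¹) := by
  rw [circ_eq_mul_lam, mul_assoc]

lemma annSet_circ_left {z : A} (hz : z ∈ annSet A) (b : A) : circ z b = z * b := by
  rw [circ_eq_mul_lam, hz.1]

lemma annSet_circ_right {z : A} (hz : z ∈ annSet A) (a : A) : circ a z = a * z := by
  rw [circ_eq_mul_lam, hz.2.2]

lemma annSet_cinv {z : A} (hz : z ∈ annSet A) : cinv z = z⁻¹ :=
  (inv_eq_of_mul_eq_one_right (a := toCirc z) (b := toCirc z⁻¹)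
    ((annSet_circ_left hz _).trans (mul_inv_cancel z)))

variable (A) in
def ann : Subgroup A where
  carrier := annSet A
  one_mem' := ⟨fun b => by rw [lam, one_circ, inv_one, one_mul], fun a => by group, lam_one⟩
  mul_mem' {x y} hx hy := by
    refine ⟨fun b => ?_, fun a => ?_, fun a => by rw [lam_mul, hx.2.2, hy.2.2]⟩
    · rw [← annSet_circ_left hx, lam_circ, hy.1, hx.1]
    · rw [← mul_assoc, hx.2.1, mul_assoc, hy.2.1, mul_assoc]
  inv_mem' {x} hx := by
    refine ⟨fun b => ?_, fun a => ?_, fun a => by rw [lam_inv, hx.2.2]⟩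
    · rw [← annSet_cinv hx, ← hx.1 (lam (cinv x) b), ← lam_circ, circ_cinv, lam, one_circ,
        inv_one, one_mul]
    · rw [mul_inv_eq_iff_eq_mul, mul_assoc, hx.2.1, inv_mul_cancel_left]

lemma ann_le_center : ann A ≤ Subgroup.center A :=
  fun _ hz => Subgroup.mem_center_iff.mpr hz.2.1

instance ann_normal : (ann A).Normal :=
  ⟨fun z hz a => by rwa [hz.2.1 a, mul_inv_cancel_right]⟩

variable (A) in
def annCirc : Subgroup (Circ A) where
  carrier := annSet A
  one_mem' := (ann A).one_mem
  mul_mem' {x y} hx hy := by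
    change circ (ofCirc x) (ofCirc y) ∈ ann A
    rw [annSet_circ_left (z := ofCirc x) hx]
    exact mul_mem hx hy
  inv_mem' {x} hx := by
    change cinv (ofCirc x) ∈ ann A
    rw [annSet_cinv (z := ofCirc x) hx]
    exact inv_mem (show x ∈ ann A from hx)

lemma annCirc_le_center : annCirc A ≤ Subgroup.center (Circ A) := fun z hz =>
  Subgroup.mem_center_iff.mpr fun a =>
    (annSet_circ_right (z := ofCirc z) hz (ofCirc a)).trans
      ((hz.2.1 a).trans (annSet_circ_left (z := ofCirc z) hz (ofCirc a)).symm)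

instance annCirc_normal : (annCirc A).Normal :=
  ⟨fun z hz a => by
    rwa [Subgroup.mem_center_iff.mp (annCirc_le_center hz) a, mul_inv_cancel_right]⟩

lemma lam_mul_of_mem_annSet {z : A} (hz : z ∈ annSet A) (a : A) : lam (a * z) = lam a := by
  funext b
  rw [← annSet_circ_right hz, lam_circ, hz.1]

lemma annRel_iff_mk_eq {a a' : A} :
    AnnRel A a a' ↔ (a : A ⧸ ann A) = a' :=
  (QuotientGroup.eq (s := ann A)).symm

lemma annRel_iff_mk_circ_eq {a a' : A} :
    AnnRel A a a' ↔ ((toCirc a : Circ A) : Circ A ⧸ annCirc A) = (toCirc a' : Circ A) := by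
  rw [QuotientGroup.eq]
  change a⁻¹ * a' ∈ annSet A ↔ circ (cinv a) a' ∈ annSet A
  constructor
  · intro hz
    have ha' : a' = circ a (a⁻¹ * a') := by rw [annSet_circ_right hz, mul_inv_cancel_left]
    rwa [ha', ← circ_assoc, cinv_circ, one_circ]
  · intro hw
    have ha' : a' = a * circ (cinv a) a' := by
      rw [← annSet_circ_right hw, ← circ_assoc, circ_cinv, one_circ]
    rwa [ha', inv_mul_cancel_left]

lemma commutatorElement_mem_braceCommutator (a b : A) : ⁅a, b⁆ ∈ braceCommutator A :=
  Subgroup.subset_closure (Or.inl ⟨a, b, rfl⟩)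

lemma lam_mul_inv_mem_braceCommutator (a b : A) : lam a b * b⁻¹ ∈ braceCommutator A := by
  have hgen : b⁻¹ * lam a b⁻¹⁻¹ ∈ braceCommutator A :=
    Subgroup.subset_closure (Or.inr ⟨b⁻¹, a, rfl⟩)
  rw [inv_inv] at hgen
  simpa [mul_assoc] using braceCommutator_normal.conj_mem _ hgen (lam a b)

lemma lam_mem_braceCommutator {x : A} (hx : x ∈ braceCommutator A) (a : A) :
    lam a x ∈ braceCommutator A := by
  simpa using mul_mem (lam_mul_inv_mem_braceCommutator a x) hx

lemma circ_mem_braceCommutator {x y : A} (hx : x ∈ braceCommutator A)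
    (hy : y ∈ braceCommutator A) : circ x y ∈ braceCommutator A := by
  rw [circ_eq_mul_lam]
  exact mul_mem hx (lam_mem_braceCommutator hy x)

lemma cinv_mem_braceCommutator {x : A} (hx : x ∈ braceCommutator A) :
    cinv x ∈ braceCommutator A := by
  rw [cinv_eq_lam_inv]
  exact lam_mem_braceCommutator (inv_mem hx) _

lemma lamOp_mem_braceCommutator {x : A} (hx : x ∈ braceCommutator A) (a : A) :
    lamOp a x ∈ braceCommutator A := by
  rw [lamOp, circ_eq_mul_lam]
  exact braceCommutator_normal.conj_mem _ (lam_mem_braceCommutator hx a) a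

lemma mk_conj (a x : A) : ((a * x * a⁻¹ : A) : A ⧸ braceCommutator A) = x := by
  rw [QuotientGroup.eq_iff_div_mem, div_eq_mul_inv]
  exact commutatorElement_mem_braceCommutator a x

lemma mk_mul_comm (x y : A) :
    (x : A ⧸ braceCommutator A) * y = y * x := by
  rw [← QuotientGroup.mk_mul, ← QuotientGroup.mk_mul, ← mk_conj x (y * x)]
  group

lemma mk_lam (a x : A) : ((lam a x : A) : A ⧸ braceCommutator A) = x := by
  rw [QuotientGroup.eq_iff_div_mem, div_eq_mul_inv]
  exact lam_mul_inv_mem_braceCommutator a x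

lemma mk_lamOp (a x : A) : ((lamOp a x : A) : A ⧸ braceCommutator A) = x := by
  rw [lamOp, circ_eq_mul_lam, mk_conj, mk_lam]

variable (A) in
/-- Modulo `A'` the two group structures of `A` coincide. -/
def circToQuotient : Circ A →* A ⧸ braceCommutator A where
  toFun y := (ofCirc y : A)
  map_one' := rfl
  map_mul' x y := by
    change ((circ (ofCirc x) (ofCirc y) : A) : A ⧸ braceCommutator A) = _
    rw [circ_eq_mul_lam, QuotientGroup.mk_mul, mk_lam]

lemma mem_braceCommutator_of_mem_commutator {y : Circ A} (hy : y ∈ commutator (Circ A)) :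
    ofCirc y ∈ braceCommutator A := by
  suffices commutator (Circ A) ≤ (circToQuotient A).ker from
    (QuotientGroup.eq_one_iff _).mp (this hy)
  rw [commutator_def, Subgroup.commutator_le]
  intro u _ v _
  rw [MonoidHom.mem_ker, map_commutatorElement, commutatorElement_eq_one_iff_mul_comm]
  exact mk_mul_comm _ _

def circComm (a b : A) : A := ofCirc ⁅toCirc a, toCirc b⁆

lemma circComm_eq (a b : A) : circComm a b
    = circ a b * (circ b a)⁻¹ * (lam (circComm a b) (circ b a) * (circ b a)⁻¹)⁻¹ := by
  have h : circ (circComm a b) (circ b a) = circ a b := by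
    change ofCirc (⁅toCirc a, toCirc b⁆ * (toCirc b * toCirc a)) = ofCirc (toCirc a * toCirc b)
    rw [commutatorElement_def]
    group
  rw [← h, circ_mul_inv_eq_mul_lam_mul_inv, mul_inv_cancel_right]

lemma circ_mul_inv_circ_eq (a b : A) : circ a b * (circ b a)⁻¹
    = a * (lam a b * b⁻¹) * a⁻¹ * ⁅a, b⁆ * (b * (lam b a * a⁻¹) * b⁻¹)⁻¹ := by
  rw [circ_eq_mul_lam a b, circ_eq_mul_lam b a, commutatorElement_def]
  group

lemma circ_mul_inv_circ_mem_braceCommutator (a b : A) :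
    circ a b * (circ b a)⁻¹ ∈ braceCommutator A := by
  rw [circ_mul_inv_circ_eq]
  exact mul_mem (mul_mem (braceCommutator_normal.conj_mem _ (lam_mul_inv_mem_braceCommutator a b) a)
    (commutatorElement_mem_braceCommutator a b))
    (inv_mem (braceCommutator_normal.conj_mem _ (lam_mul_inv_mem_braceCommutator b a) b))

lemma lam_mul_inv_eq_of_annRel {a a' b b' : A} (ha : AnnRel A a a') (hb : AnnRel A b b') :
    lam a b * b⁻¹ = lam a' b' * b'⁻¹ := by
  obtain ⟨z, hz, rfl⟩ : ∃ z ∈ annSet A, a' = a * z :=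
    ⟨_, ha, (mul_inv_cancel_left a a').symm⟩
  obtain ⟨w, hw, rfl⟩ : ∃ w ∈ annSet A, b' = b * w :=
    ⟨_, hb, (mul_inv_cancel_left b b').symm⟩
  rw [lam_mul_of_mem_annSet hz, lam_mul, hw.2.2, mul_inv_rev, mul_assoc, mul_inv_cancel_left]

section LambdaOp

open SemidirectProduct

lemma lamOpHom_apply (a : Circ A) (x : A) : lamOpHom a x = lamOp (ofCirc a) x :=
  lamOpEquiv_apply _ x

variable (A) in
/-- The subgroup `A' ⋊ (A, ∘)'` of `Λ_{Aᵒᵖ}`. -/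
def lambdaOpCommutator : Subgroup (LambdaOp A) where
  carrier := {x | x.left ∈ braceCommutator A ∧ x.right ∈ commutator (Circ A)}
  one_mem' := ⟨one_mem _, one_mem _⟩
  mul_mem' {x y} hx hy := by
    refine ⟨?_, mul_mem hx.2 hy.2⟩
    rw [mul_left, lamOpHom_apply]
    exact mul_mem hx.1 (lamOp_mem_braceCommutator hy.1 _)
  inv_mem' {x} hx := by
    refine ⟨?_, inv_mem hx.2⟩
    rw [inv_left, lamOpHom_apply]
    exact lamOp_mem_braceCommutator (inv_mem hx.1) _

variable (A) in
def leftToQuotient : LambdaOp A →* A ⧸ braceCommutator A where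
  toFun x := (x.left : A)
  map_one' := rfl
  map_mul' x y := by
    rw [mul_left, QuotientGroup.mk_mul, lamOpHom_apply, mk_lamOp]

lemma commutator_lambdaOp_le : commutator (LambdaOp A) ≤ lambdaOpCommutator A := by
  rw [commutator_def, Subgroup.commutator_le]
  intro x _ y _
  refine ⟨?_, ?_⟩
  · have h : leftToQuotient A ⁅x, y⁆ = 1 := by
      rw [map_commutatorElement, commutatorElement_eq_one_iff_mul_comm]
      exact mk_mul_comm _ _
    exact (QuotientGroup.eq_one_iff _).mp h
  · rw [← rightHom_eq_right, map_commutatorElement]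
    exact Subgroup.commutator_mem_commutator (Subgroup.mem_top _) (Subgroup.mem_top _)

lemma commutatorElement_inl_inr (a : A) (b : Circ A) :
    ⁅(inl a : LambdaOp A), (inr b : LambdaOp A)⁆ = inl (a * lamOp (ofCirc b) a⁻¹) := by
  calc ⁅(inl a : LambdaOp A), (inr b : LambdaOp A)⁆
        = inl a * (inr b * inl a⁻¹ * inr b⁻¹) := by
          simp only [commutatorElement_def, map_inv]
          group
    _ = inl (a * lamOp (ofCirc b) a⁻¹) := by rw [← inl_aut, ← map_mul, lamOpHom_apply]

lemma map_inl_braceCommutator_le :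
    (braceCommutator A).map inl ≤ commutator (LambdaOp A) := by
  rw [Subgroup.map_le_iff_le_comap, braceCommutator, Subgroup.closure_le]
  rintro _ (⟨a, b, rfl⟩ | ⟨a, b, rfl⟩)
  · change inl ⁅a, b⁆ ∈ commutator (LambdaOp A)
    rw [map_commutatorElement]
    exact Subgroup.commutator_mem_commutator (Subgroup.mem_top _) (Subgroup.mem_top _)
  · have hdecomp : a * lam b a⁻¹
        = ⁅a, b⁻¹⁆ * (b⁻¹ * (a * lamOp b a⁻¹) * b⁻¹⁻¹) := by
      rw [lamOp, circ_eq_mul_lam, commutatorElement_def]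
      group
    change inl (a * lam b a⁻¹) ∈ commutator (LambdaOp A)
    rw [hdecomp, map_mul, map_mul, map_mul, map_inv inl b⁻¹, map_commutatorElement,
      show b = ofCirc (toCirc b) from rfl, ← commutatorElement_inl_inr]
    exact mul_mem (Subgroup.commutator_mem_commutator (Subgroup.mem_top _) (Subgroup.mem_top _))
      ((Subgroup.commutator_normal ⊤ ⊤).conj_mem _
        (Subgroup.commutator_mem_commutator (Subgroup.mem_top _) (Subgroup.mem_top _)) _)

lemma map_inr_commutator_le :
    (commutator (Circ A)).map (inr (φ := lamOpHom)) ≤ commutator (LambdaOp A) := by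
  rw [commutator_def, commutator_def, Subgroup.map_commutator]
  exact Subgroup.commutator_mono le_top le_top

lemma commutator_lambdaOp : commutator (LambdaOp A) = lambdaOpCommutator A := by
  refine le_antisymm commutator_lambdaOp_le fun x hx => ?_
  rw [← inl_left_mul_inr_right x]
  exact mul_mem (map_inl_braceCommutator_le ⟨_, hx.1, rfl⟩)
    (map_inr_commutator_le ⟨_, hx.2, rfl⟩)

end LambdaOp

end SkewLeftBrace

namespace SkewBraceIsoclinism

open SkewLeftBrace

variable {A B : Type*} [SkewLeftBrace A] [SkewLeftBrace B] (ι : SkewBraceIsoclinism A B)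

def toQuotient : A →* B ⧸ ann B :=
  MonoidHom.mk' (fun a => (ι.f a : B ⧸ ann B)) fun a a' => by
    rw [← QuotientGroup.mk_mul]
    exact annRel_iff_mk_eq.mp (ι.f_mul a a')

def toQuotientCirc : Circ A →* Circ B ⧸ annCirc B :=
  MonoidHom.mk' (fun a => ((toCirc (ι.f (ofCirc a)) : Circ B) : Circ B ⧸ annCirc B))
    fun a a' => by
      rw [← QuotientGroup.mk_mul]
      exact annRel_iff_mk_circ_eq.mp (ι.f_circ a a')

lemma f_lam_mul_inv (a b : A) :
    AnnRel B (ι.f (lam a b * b⁻¹)) (lam (ι.f a) (ι.f b) * (ι.f b)⁻¹) := by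
  rw [annRel_iff_mk_eq]
  change ι.toQuotient (a⁻¹ * circ a b * b⁻¹) = _
  rw [map_mul, map_mul, map_inv, map_inv]
  change ((ι.f a : B) : B ⧸ ann B)⁻¹ * (ι.f (circ a b) : B)
    * ((ι.f b : B) : B ⧸ ann B)⁻¹ = _
  rw [annRel_iff_mk_eq.mp (ι.f_circ a b), lam]
  simp only [QuotientGroup.mk_mul, QuotientGroup.mk_inv]

lemma f_circComm (a b : A) : AnnRel B (ι.f (circComm a b)) (circComm (ι.f a) (ι.f b)) := by
  rw [annRel_iff_mk_circ_eq]
  exact (map_commutatorElement ι.toQuotientCirc _ _).trans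
    (map_commutatorElement (QuotientGroup.mk' (annCirc B)) _ _).symm

def gHom : braceCommutator A →* B :=
  MonoidHom.mk' (fun x => ι.g x) fun x y => ι.g_mul _ x.2 _ y.2

lemma g_one : ι.g 1 = 1 := map_one ι.gHom

lemma g_inv {x : A} (hx : x ∈ braceCommutator A) : ι.g x⁻¹ = (ι.g x)⁻¹ :=
  map_inv ι.gHom ⟨x, hx⟩

lemma g_cinv {x : A} (hx : x ∈ braceCommutator A) : ι.g (cinv x) = cinv (ι.g x) := by
  have h := ι.g_circ x hx (cinv x) (cinv_mem_braceCommutator hx)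
  rw [circ_cinv, g_one] at h
  exact (inv_eq_of_mul_eq_one_right (a := toCirc (ι.g x)) h.symm).symm

lemma g_lamOp {x y : A} (hx : x ∈ braceCommutator A) (hy : y ∈ braceCommutator A) :
    ι.g (lamOp x y) = lamOp (ι.g x) (ι.g y) := by
  rw [lamOp, ι.g_mul _ (circ_mem_braceCommutator hx hy) _ (inv_mem hx), ι.g_inv hx,
    ι.g_circ _ hx _ hy, lamOp]

lemma g_commutatorElement (a b : A) : ι.g ⁅a, b⁆ = ⁅ι.f a, ι.f b⁆ := ι.compat_theta a b

lemma g_conj_lam_mul_inv (a b c : A) : ι.g (c * (lam a b * b⁻¹) * c⁻¹)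
    = ι.f c * (lam (ι.f a) (ι.f b) * (ι.f b)⁻¹) * (ι.f c)⁻¹ := by
  set t := lam a b * b⁻¹
  set t' := lam (ι.f a) (ι.f b) * (ι.f b)⁻¹
  have ht : ι.g t = t' := ι.compat_thetaStar a b
  calc ι.g (c * t * c⁻¹)
        = ι.g (⁅c, t⁆ * t) := by rw [commutatorElement_def, inv_mul_cancel_right]
    _ = ⁅ι.f c, ι.f t⁆ * t' := by
      rw [ι.g_mul _ (commutatorElement_mem_braceCommutator c t) _
        (lam_mul_inv_mem_braceCommutator a b), ht, g_commutatorElement]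
    _ = ⁅ι.f c, t'⁆ * t' := by
      rw [commutatorElement_eq_of_mk_eq ann_le_center rfl
        (annRel_iff_mk_eq.mp (ι.f_lam_mul_inv a b))]
    _ = ι.f c * t' * (ι.f c)⁻¹ := by rw [commutatorElement_def, inv_mul_cancel_right]

lemma g_circ_mul_inv_circ (a b : A) : ι.g (circ a b * (circ b a)⁻¹)
    = circ (ι.f a) (ι.f b) * (circ (ι.f b) (ι.f a))⁻¹ := by
  have h₁ := braceCommutator_normal.conj_mem _ (lam_mul_inv_mem_braceCommutator a b) a
  have h₂ := commutatorElement_mem_braceCommutator a b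
  have h₃ := braceCommutator_normal.conj_mem _ (lam_mul_inv_mem_braceCommutator b a) b
  rw [circ_mul_inv_circ_eq, ι.g_mul _ (mul_mem h₁ h₂) _ (inv_mem h₃), ι.g_mul _ h₁ _ h₂,
    ι.g_inv h₃, g_conj_lam_mul_inv, g_conj_lam_mul_inv, g_commutatorElement,
    ← circ_mul_inv_circ_eq]

lemma g_circComm (a b : A) : ι.g (circComm a b) = circComm (ι.f a) (ι.f b) := by
  have ht := lam_mul_inv_mem_braceCommutator (circComm a b) (circ b a)
  conv_lhs => rw [circComm_eq]
  rw [ι.g_mul _ (circ_mul_inv_circ_mem_braceCommutator a b) _ (inv_mem ht), ι.g_inv ht,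
    g_circ_mul_inv_circ, ι.compat_thetaStar,
    lam_mul_inv_eq_of_annRel (ι.f_circComm a b) (ι.f_circ b a)]
  exact (circComm_eq _ _).symm

lemma g_mem_commutator_circ {y : Circ A} (hy : y ∈ commutator (Circ A)) :
    toCirc (ι.g (ofCirc y)) ∈ commutator (Circ B) := by
  rw [commutator_eq_closure] at hy
  induction hy using Subgroup.closure_induction with
  | mem y hy =>
    obtain ⟨a, b, rfl⟩ := hy
    exact (ι.g_circComm a b).symm ▸ Subgroup.commutator_mem_commutator
      (Subgroup.mem_top _) (Subgroup.mem_top _)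
  | one => exact ι.g_one ▸ one_mem _
  | mul x y hx hy ihx ihy =>
    rw [← commutator_eq_closure] at hx hy
    change toCirc (ι.g (circ (ofCirc x) (ofCirc y))) ∈ _
    rw [ι.g_circ _ (mem_braceCommutator_of_mem_commutator hx) _
      (mem_braceCommutator_of_mem_commutator hy)]
    exact mul_mem ihx ihy
  | inv x hx ihx =>
    rw [← commutator_eq_closure] at hx
    change toCirc (ι.g (cinv (ofCirc x))) ∈ _
    rw [ι.g_cinv (mem_braceCommutator_of_mem_commutator hx)]
    exact inv_mem ihx

lemma exists_g_eq_of_mem_commutator_circ {v : Circ B} (hv : v ∈ commutator (Circ B)) :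
    ∃ y ∈ commutator (Circ A), toCirc (ι.g (ofCirc y)) = v := by
  rw [commutator_eq_closure] at hv
  induction hv using Subgroup.closure_induction with
  | mem v hv =>
    obtain ⟨u, v, rfl⟩ := hv
    obtain ⟨a, ha⟩ := ι.f_surj (ofCirc u)
    obtain ⟨b, hb⟩ := ι.f_surj (ofCirc v)
    refine ⟨⁅toCirc a, toCirc b⁆, Subgroup.commutator_mem_commutator (Subgroup.mem_top _)
      (Subgroup.mem_top _), ?_⟩
    change toCirc (ι.g (circComm a b)) = _
    rw [ι.g_circComm]
    exact commutatorElement_eq_of_mk_eq annCirc_le_center (annRel_iff_mk_circ_eq.mp ha)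
      (annRel_iff_mk_circ_eq.mp hb)
  | one => exact ⟨1, one_mem _, ι.g_one⟩
  | mul v w _ _ ihv ihw =>
    obtain ⟨y, hy, rfl⟩ := ihv
    obtain ⟨z, hz, rfl⟩ := ihw
    refine ⟨y * z, mul_mem hy hz, ?_⟩
    exact ι.g_circ _ (mem_braceCommutator_of_mem_commutator hy) _
      (mem_braceCommutator_of_mem_commutator hz)
  | inv v _ ihv =>
    obtain ⟨y, hy, rfl⟩ := ihv
    exact ⟨y⁻¹, inv_mem hy, ι.g_cinv (mem_braceCommutator_of_mem_commutator hy)⟩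

def lambdaOpCommutatorHom : lambdaOpCommutator A →* lambdaOpCommutator B :=
  MonoidHom.mk'
    (fun x => ⟨⟨ι.g x.1.left, toCirc (ι.g (ofCirc x.1.right))⟩,
      ι.g_maps _ x.2.1, ι.g_mem_commutator_circ x.2.2⟩)
    fun x y => by
      have hx := mem_braceCommutator_of_mem_commutator x.2.2
      have hy := mem_braceCommutator_of_mem_commutator y.2.2
      refine Subtype.ext (SemidirectProduct.ext ?_ ?_)
      · change ι.g (x.1.left * lamOpHom x.1.right y.1.left) = _ * lamOpHom _ _
        rw [lamOpHom_apply, lamOpHom_apply, ι.g_mul _ x.2.1 _ (lamOp_mem_braceCommutator y.2.1 _),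
          ι.g_lamOp hx y.2.1]
        rfl
      · exact ι.g_circ _ hx _ hy

lemma lambdaOpCommutatorHom_bijective : Function.Bijective ι.lambdaOpCommutatorHom := by
  refine ⟨fun x y hxy => ?_, fun w => ?_⟩
  · have hl := congrArg (fun w : lambdaOpCommutator B => w.1.left) hxy
    have hr := congrArg (fun w : lambdaOpCommutator B => ofCirc w.1.right) hxy
    exact Subtype.ext (SemidirectProduct.ext (ι.g_bij.injOn x.2.1 y.2.1 hl)
      (ι.g_bij.injOn (mem_braceCommutator_of_mem_commutator x.2.2)
        (mem_braceCommutator_of_mem_commutator y.2.2) hr))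
  · obtain ⟨x, hx, hgx⟩ := ι.g_bij.surjOn w.2.1
    obtain ⟨y, hy, hgy⟩ := ι.exists_g_eq_of_mem_commutator_circ w.2.2
    exact ⟨⟨⟨x, y⟩, hx, hy⟩, Subtype.ext (SemidirectProduct.ext hgx hgy)⟩

end SkewBraceIsoclinism

/-- if `A` and `B` are isoclinic skew left braces, then the
commutator subgroups of `Λ_{Aᵒᵖ}` and `Λ_{Bᵒᵖ}` are isomorphic groups. -/
theorem isoclinic_commutator_lambdaOp_iso (A B : Type*)
    [SkewLeftBrace A] [SkewLeftBrace B] (h : Nonempty (SkewBraceIsoclinism A B)) :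
    Nonempty (↥(commutator (LambdaOp A)) ≃* ↥(commutator (LambdaOp B))) := by
  obtain ⟨ι⟩ := h
  exact ⟨(MulEquiv.subgroupCongr commutator_lambdaOp).trans
    ((MulEquiv.ofBijective _ ι.lambdaOpCommutatorHom_bijective).trans
      (MulEquiv.subgroupCongr commutator_lambdaOp.symm))⟩
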